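/- Let X be the fundamental matrix of x'(t) = A₀ x(t) + Σ_{j=1}^m A_j x(t-τ_j). If X(t) → 0 as t → ∞ and the improper integral ∫₀^∞ X(σ) dσ converges, then (A₀ + Σ_j A_j) ∫₀^∞ X(σ) dσ = -I. -/

import Mathlib

open Filter Set MeasureTheory intervalIntegral
open scoped Topology

attribute [local instance] Matrix.frobeniusNormedAddCommGroup Matrix.frobeniusNormedSpace

/-! Integrating the equation from `0` to `t` gives `X t - X 0 = A₀ ∫₀ᵗ X + ∑ⱼ Aⱼ ∫₀^{t-τⱼ} X`,
where the delayed integrals start at `0` because `X` vanishes on the negative half-line.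
Letting `t → ∞`, the left side tends to `-X 0` and every integral on the right tends to `L`. -/

section DelayEquation

variable {E : Type*} [NormedAddCommGroup E] {X X' : ℝ → E}

theorem intervalIntegrable_of_continuousOn_Ici (hzero : ∀ t < 0, X t = 0)
    (hcont : ContinuousOn X (Ici 0)) (a b : ℝ) : IntervalIntegrable X volume a b := by
  have hX : (Ici 0).indicator X = X :=
    indicator_eq_self.2 fun t ht => not_lt.1 fun h => ht (hzero t h)
  refine IntegrableOn.intervalIntegrable (μ := volume) ?_
  rw [← hX, IntegrableOn, integrable_indicator_iff measurableSet_Ici, IntegrableOn,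
    Measure.restrict_restrict measurableSet_Ici]
  exact (hcont.mono inter_subset_left).integrableOn_compact (isCompact_uIcc.inter_left isClosed_Ici)

variable [NormedSpace ℝ E]

theorem ContinuousLinearMap.intervalIntegrable_comp {F : Type*} [NormedAddCommGroup F]
    [NormedSpace ℝ F] (T : E →L[ℝ] F) {a b : ℝ} (hX : IntervalIntegrable X volume a b) :
    IntervalIntegrable (fun t => T (X t)) volume a b :=
  ⟨T.integrable_comp hX.1, T.integrable_comp hX.2⟩

theorem intervalIntegral_comp_sub_of_eq_zero (hzero : ∀ t < 0, X t = 0)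
    (hX : ∀ a b, IntervalIntegrable X volume a b) {c : ℝ} (hc : 0 ≤ c) (t : ℝ) :
    ∫ σ in 0..t, X (σ - c) = ∫ σ in 0..t - c, X σ := by
  have hneg : ∫ σ in -c..0, X σ = 0 := by
    rw [integral_of_le (neg_nonpos.2 hc), integral_Ioc_eq_integral_Ioo]
    exact setIntegral_eq_zero_of_forall_eq_zero fun σ hσ => hzero σ hσ.2
  rw [integral_comp_sub_right, zero_sub, ← integral_add_adjacent_intervals (hX (-c) 0)
    (hX 0 (t - c)), hneg, zero_add]

variable [CompleteSpace E] {ι : Type*} [Fintype ι]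
  {A₀ : E →L[ℝ] E} {A : ι → E →L[ℝ] E} {τ : ι → ℝ}

theorem sub_eq_map_integral_add_sum_map_integral (hτ : ∀ j, 0 ≤ τ j)
    (hzero : ∀ t < 0, X t = 0) (hcont : ContinuousOn X (Ici 0))
    (hderiv : ∀ t ∈ Ici (0:ℝ), X' t = A₀ (X t) + ∑ j, A j (X (t - τ j)))
    (hderiv' : ∀ t ∈ Ioi (0:ℝ), HasDerivAt X (X' t) t) {t : ℝ} (ht : 0 ≤ t) :
    X t - X 0 = A₀ (∫ σ in 0..t, X σ) + ∑ j, A j (∫ σ in 0..t - τ j, X σ) := by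
  have hX := intervalIntegrable_of_continuousOn_Ici hzero hcont
  have hXdelayed : ∀ j, IntervalIntegrable (fun s => X (s - τ j)) volume 0 t := fun j => by
    simpa using (hX (0 - τ j) (t - τ j)).comp_sub_right (τ j)
  have hdelayed j := (A j).intervalIntegrable_comp (hXdelayed j)
  have hsum : IntervalIntegrable (fun s => ∑ j, A j (X (s - τ j))) volume 0 t := by
    simpa only [Finset.sum_fn] using IntervalIntegrable.sum Finset.univ fun j _ => hdelayed j
  have hrhs := (A₀.intervalIntegrable_comp (hX 0 t)).add hsum
  have hX' : IntervalIntegrable X' volume 0 t := by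
    rw [intervalIntegrable_iff_integrableOn_Ioc_of_le ht]
    exact ((intervalIntegrable_iff_integrableOn_Ioc_of_le ht).1 hrhs).congr_fun
      (fun s hs => (hderiv s hs.1.le).symm) measurableSet_Ioc
  calc X t - X 0 = ∫ s in 0..t, X' s :=
        (integral_eq_sub_of_hasDeriv_right_of_le ht (hcont.mono Icc_subset_Ici_self)
          (fun s hs => (hderiv' s hs.1).hasDerivWithinAt) hX').symm
    _ = ∫ s in 0..t, (A₀ (X s) + ∑ j, A j (X (s - τ j))) :=
        integral_congr fun s hs => hderiv s (by rw [uIcc_of_le ht] at hs; exact hs.1)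
    _ = A₀ (∫ σ in 0..t, X σ) + ∑ j, A j (∫ σ in 0..t - τ j, X σ) := by
        rw [integral_add (A₀.intervalIntegrable_comp (hX 0 t)) hsum,
          integral_finsetSum fun j _ => hdelayed j, A₀.intervalIntegral_comp_comm (hX 0 t)]
        congr 1
        refine Finset.sum_congr rfl fun j _ => ?_
        rw [(A j).intervalIntegral_comp_comm (hXdelayed j),
          intervalIntegral_comp_sub_of_eq_zero hzero hX (hτ j)]

theorem map_add_sum_map_eq_neg_of_tendsto_integral (hτ : ∀ j, 0 ≤ τ j)
    (hzero : ∀ t < 0, X t = 0) (hcont : ContinuousOn X (Ici 0))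
    (hderiv : ∀ t ∈ Ici (0:ℝ), X' t = A₀ (X t) + ∑ j, A j (X (t - τ j)))
    (hderiv' : ∀ t ∈ Ioi (0:ℝ), HasDerivAt X (X' t) t) (hX0 : Tendsto X atTop (𝓝 0))
    {L : E} (hlim : Tendsto (fun t => ∫ σ in 0..t, X σ) atTop (𝓝 L)) :
    A₀ L + ∑ j, A j L = -X 0 := by
  have hlhs : Tendsto (fun t => X t - X 0) atTop (𝓝 (-X 0)) := by
    simpa using hX0.sub_const (X 0)
  have hmap : ∀ (T : E →L[ℝ] E) {u : ℝ → ℝ}, Tendsto u atTop atTop →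
      Tendsto (fun t => T (∫ σ in 0..u t, X σ)) atTop (𝓝 (T L)) := fun T _ hu =>
    (T.continuous.tendsto L).comp (hlim.comp hu)
  have hrhs := (hmap A₀ tendsto_id).add <| tendsto_finsetSum Finset.univ fun j _ =>
    hmap (A j) (tendsto_atTop_add_const_right _ (-τ j) tendsto_id)
  have heq : (fun t => X t - X 0) =ᶠ[atTop]
      fun t => A₀ (∫ σ in 0..t, X σ) + ∑ j, A j (∫ σ in 0..t - τ j, X σ) :=
    (eventually_ge_atTop 0).mono fun t ht =>
      sub_eq_map_integral_add_sum_map_integral hτ hzero hcont hderiv hderiv' ht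
  exact tendsto_nhds_unique hrhs (hlhs.congr' heq)

end DelayEquation

/-- Necessity direction of Theorem 1 (lemma of Győri et al.): if the fundamental matrix
tends to `0` and its improper integral converges to `L`, then `(A₀ + ∑ j, A j) * L = -I`. -/
theorem sum_mul_integral_eq_neg_one (n m : ℕ)
    (A₀ : Matrix (Fin n) (Fin n) ℝ) (A : Fin m → Matrix (Fin n) (Fin n) ℝ)
    (τ : Fin m → ℝ) (hτ : ∀ j, 0 < τ j)
    (X X' : ℝ → Matrix (Fin n) (Fin n) ℝ)
    (hzero : ∀ t < (0:ℝ), X t = 0) (hinit : X 0 = 1)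
    (hcont : ContinuousOn X (Ici 0))
    (hderiv : ∀ t ∈ Ici (0:ℝ), X' t = A₀ * X t + ∑ j, A j * X (t - τ j))
    (hderiv' : ∀ t ∈ Ioi (0:ℝ), HasDerivAt X (X' t) t)
    (hX0 : Tendsto X atTop (𝓝 0))
    (L : Matrix (Fin n) (Fin n) ℝ)
    (hlim : Tendsto (fun t => ∫ σ in (0:ℝ)..t, X σ) atTop (𝓝 L)) :
    (A₀ + ∑ j, A j) * L = -1 := by
  let mulLeft (M : Matrix (Fin n) (Fin n) ℝ) :
      Matrix (Fin n) (Fin n) ℝ →L[ℝ] Matrix (Fin n) (Fin n) ℝ :=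
    (LinearMap.mulLeft ℝ M).toContinuousLinearMap
  rw [add_mul, Finset.sum_mul, ← hinit]
  exact map_add_sum_map_eq_neg_of_tendsto_integral (A₀ := mulLeft A₀)
    (A := fun j => mulLeft (A j)) (fun j => (hτ j).le) hzero hcont hderiv hderiv' hX0 hlim
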